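/- arXiv:2007.00820 — 2 statements merged into one kernel-verified Lean document; each statement's English description precedes it below -/
import Mathlib

section
/- Let s_R, s_H ⊆ F be states and let π be a plan (a finite sequence of actions in A). Then π is executable from the state s_R ⊎ s_H with respect to the compiled problem P_mod if and only if π is executable from s_R with respect to P_R and π is executable from s_H with respect to P_H; and in that case the resulting state of π in P_mod from s_R ⊎ s_H equals r_R ⊎ r_H, where r_R and r_H are the resulting states of π from s_R in P_R and from s_H in P_H respectively. -/
/-- A STRIPS planning problem over fluents `F` and actions `A`. -/
structure Problem (F : Type) (A : Type) where
  pre : A → Set F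
  add : A → Set F
  del : A → Set F
  I : Set F
  G : Set F

/-- Applying action `a` in state `s`. -/
def applyAct {F A : Type} (P : Problem F A) (s : Set F) (a : A) : Set F :=
  (s ∪ P.add a) \ P.del a

/-- A plan is executable from a state iff each action's precondition holds
in the state obtained by applying the preceding actions. -/
def Executable {F A : Type} (P : Problem F A) : Set F → List A → Prop
  | _, [] => True
  | s, a :: rest => P.pre a ⊆ s ∧ Executable P (applyAct P s a) rest

/-- The resulting state of a plan from a state. -/
def result {F A : Type} (P : Problem F A) : Set F → List A → Set F
  | s, [] => s
  | s, a :: rest => result P (applyAct P s a) rest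

/-- A plan solves a problem iff it is executable from the initial state and
its resulting state contains the goal. -/
def Solves {F A : Type} (P : Problem F A) (π : List A) : Prop :=
  Executable P P.I π ∧ P.G ⊆ result P P.I π

/-- Tagged union of two states: `s_R ⊎ s_H ⊆ F ⊕ F`. -/
def tagUnion {F : Type} (sR sH : Set F) : Set (F ⊕ F) :=
  Sum.inl '' sR ∪ Sum.inr '' sH

/-- The compiled problem `P_mod` over `F ⊕ F`. -/
def compiled {F A : Type} (PR PH : Problem F A) : Problem (F ⊕ F) A where
  pre a := tagUnion (PR.pre a) (PH.pre a)
  add a := tagUnion (PR.add a) (PH.add a)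
  del a := tagUnion (PR.del a) (PH.del a)
  I := tagUnion PR.I PH.I
  G := tagUnion PR.G PH.G


lemma tag_subset {F : Type} {p q sR sH : Set F} :
    tagUnion p q ⊆ tagUnion sR sH ↔ p ⊆ sR ∧ q ⊆ sH := by
  constructor
  · intro h
    constructor
    · intro x hx
      have := h (Or.inl ⟨x, hx, rfl⟩)
      rcases this with ⟨y, hy, e⟩ | ⟨y, hy, e⟩
      · cases e; exact hy
      · cases e
    · intro x hx
      have := h (Or.inr ⟨x, hx, rfl⟩)
      rcases this with ⟨y, hy, e⟩ | ⟨y, hy, e⟩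
      · cases e
      · cases e; exact hy
  · rintro ⟨h1, h2⟩ x (⟨y, hy, rfl⟩ | ⟨y, hy, rfl⟩)
    · exact Or.inl ⟨y, h1 hy, rfl⟩
    · exact Or.inr ⟨y, h2 hy, rfl⟩

lemma apply_tag {F A : Type} (PR PH : Problem F A) (sR sH : Set F) (a : A) :
    applyAct (compiled PR PH) (tagUnion sR sH) a =
      tagUnion (applyAct PR sR a) (applyAct PH sH a) := by
  ext x
  cases x <;> simp [applyAct, compiled, tagUnion]

theorem stmt_2 {F A : Type} (PR PH : Problem F A) (sR sH : Set F) (π : List A) :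
    (Executable (compiled PR PH) (tagUnion sR sH) π ↔
      Executable PR sR π ∧ Executable PH sH π) ∧
    (Executable (compiled PR PH) (tagUnion sR sH) π →
      result (compiled PR PH) (tagUnion sR sH) π =
        tagUnion (result PR sR π) (result PH sH π)) := by
  induction π generalizing sR sH with
  | nil => exact ⟨by simp [Executable], fun _ => rfl⟩
  | cons a rest ih =>
    constructor
    · constructor
      · rintro ⟨hpre, hexec⟩
        rw [show (compiled PR PH).pre a = tagUnion (PR.pre a) (PH.pre a) from rfl,
          tag_subset] at hpre
        rw [apply_tag] at hexec
        have := (ih _ _).1.mp hexec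
        exact ⟨⟨hpre.1, this.1⟩, ⟨hpre.2, this.2⟩⟩
      · rintro ⟨⟨h1, e1⟩, ⟨h2, e2⟩⟩
        refine ⟨tag_subset.mpr ⟨h1, h2⟩, ?_⟩
        rw [apply_tag]
        exact (ih _ _).1.mpr ⟨e1, e2⟩
    · rintro ⟨hpre, hexec⟩
      rw [apply_tag] at hexec
      show result (compiled PR PH) (applyAct (compiled PR PH) (tagUnion sR sH) a) rest = _
      rw [apply_tag]
      exact (ih _ _).2 hexec
end

section
/- (Cheapest most explicable plan via the compilation.) Assume there exists a plan solving both the robot's problem P_R and the human's problem P_H, and assume unit action costs. Let π* be a minimum-length solution of the compiled problem P_mod. Then π* attains the minimum inexplicability score among all plans solving P_R, and len(π*) ≤ len(π) for every plan π solving P_R that attains this minimum inexplicability score; that is, π* is a cheapest most explicable plan for the explicable planning problem. -/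
-- Inexplicability score (unit action costs): `exp (|len π - c_H*|)` if `π`
-- also solves `P_H`, and `∞` otherwise; valued in `[0, ∞]`.
open Classical in
noncomputable def IE {F A : Type} (PH : Problem F A) (cH : ℕ) (π : List A) : ENNReal :=
  if Solves PH π then ENNReal.ofReal (Real.exp |(π.length : ℝ) - (cH : ℝ)|) else ⊤

lemma mem_tagUnion_inl {F : Type} (s t : Set F) (f : F) :
    Sum.inl f ∈ tagUnion s t ↔ f ∈ s := by simp [tagUnion]

lemma mem_tagUnion_inr {F : Type} (s t : Set F) (f : F) :
    Sum.inr f ∈ tagUnion s t ↔ f ∈ t := by simp [tagUnion]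

lemma tagUnion_subset {F : Type} {s t s' t' : Set F} :
    tagUnion s t ⊆ tagUnion s' t' ↔ s ⊆ s' ∧ t ⊆ t' := by
  constructor
  · intro h
    refine ⟨fun f hf => ?_, fun f hf => ?_⟩
    · have := h (show Sum.inl f ∈ tagUnion s t from (mem_tagUnion_inl s t f).2 hf)
      rwa [mem_tagUnion_inl] at this
    · have := h (show Sum.inr f ∈ tagUnion s t from (mem_tagUnion_inr s t f).2 hf)
      rwa [mem_tagUnion_inr] at this
  · rintro ⟨h1, h2⟩ x hx
    rcases hx with ⟨f, hf, rfl⟩ | ⟨f, hf, rfl⟩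
    · exact Or.inl ⟨f, h1 hf, rfl⟩
    · exact Or.inr ⟨f, h2 hf, rfl⟩

lemma applyAct_compiled {F A : Type} (PR PH : Problem F A) (s t : Set F) (a : A) :
    applyAct (compiled PR PH) (tagUnion s t) a
      = tagUnion (applyAct PR s a) (applyAct PH t a) := by
  ext x
  cases x with
  | inl f => simp [applyAct, compiled, mem_tagUnion_inl, mem_tagUnion_inr]
  | inr f => simp [applyAct, compiled, mem_tagUnion_inl, mem_tagUnion_inr]

lemma result_compiled {F A : Type} (PR PH : Problem F A) :
    ∀ (π : List A) (s t : Set F),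
      result (compiled PR PH) (tagUnion s t) π = tagUnion (result PR s π) (result PH t π)
  | [], s, t => rfl
  | a :: rest, s, t => by
      simp only [result, applyAct_compiled]
      exact result_compiled PR PH rest _ _

lemma compiled_pre {F A : Type} (PR PH : Problem F A) (a : A) :
    (compiled PR PH).pre a = tagUnion (PR.pre a) (PH.pre a) := rfl

lemma executable_compiled {F A : Type} (PR PH : Problem F A) :
    ∀ (π : List A) (s t : Set F),
      Executable (compiled PR PH) (tagUnion s t) π ↔
        Executable PR s π ∧ Executable PH t π
  | [], s, t => by simp [Executable]
  | a :: rest, s, t => by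
      simp only [Executable, compiled_pre, tagUnion_subset, applyAct_compiled,
        executable_compiled PR PH rest]
      tauto

lemma solves_compiled_iff {F A : Type} (PR PH : Problem F A) (π : List A) :
    Solves (compiled PR PH) π ↔ Solves PR π ∧ Solves PH π := by
  have hI : (compiled PR PH).I = tagUnion PR.I PH.I := rfl
  have hG : (compiled PR PH).G = tagUnion PR.G PH.G := rfl
  simp only [Solves, hI, hG, executable_compiled, result_compiled, tagUnion_subset]
  tauto

theorem stmt_11 {F A : Type} (PR PH : Problem F A) (cH : ℕ)
    (hcH_att : ∃ π : List A, Solves PH π ∧ π.length = cH)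
    (hcH_min : ∀ π : List A, Solves PH π → cH ≤ π.length)
    (hboth : ∃ π : List A, Solves PR π ∧ Solves PH π)
    (πs : List A) (hπs : Solves (compiled PR PH) πs)
    (hπs_min : ∀ π : List A, Solves (compiled PR PH) π → πs.length ≤ π.length) :
    (∀ π : List A, Solves PR π → IE PH cH πs ≤ IE PH cH π) ∧
    (∀ π : List A, Solves PR π →
      (∀ π' : List A, Solves PR π' → IE PH cH π ≤ IE PH cH π') →
      πs.length ≤ π.length) := by
  obtain ⟨π0, hπ0R, hπ0H⟩ := hboth
  have hπs' := (solves_compiled_iff PR PH πs).1 hπs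
  have hIEπs : IE PH cH πs = ENNReal.ofReal (Real.exp ((πs.length : ℝ) - cH)) := by
    rw [IE, if_pos hπs'.2, abs_of_nonneg]
    have h : (cH : ℝ) ≤ πs.length := by exact_mod_cast hcH_min πs hπs'.2
    linarith
  constructor
  · intro π hπ
    by_cases hH : Solves PH π
    · have hlen : πs.length ≤ π.length :=
        hπs_min π ((solves_compiled_iff PR PH π).2 ⟨hπ, hH⟩)
      rw [hIEπs, IE, if_pos hH, abs_of_nonneg]
      · apply ENNReal.ofReal_le_ofReal
        apply Real.exp_le_exp.2
        have h1 := hcH_min π hH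
        have : (πs.length : ℝ) ≤ π.length := by exact_mod_cast hlen
        linarith
      · have := hcH_min π hH
        have : (cH : ℝ) ≤ π.length := by exact_mod_cast this
        linarith
    · rw [hIEπs, IE, if_neg hH]; exact le_top
  · intro π hπ hmin
    have hle := hmin π0 hπ0R
    have hH : Solves PH π := by
      by_contra hH
      rw [IE, if_neg hH, top_le_iff, IE, if_pos hπ0H] at hle
      exact ENNReal.ofReal_ne_top hle
    exact hπs_min π ((solves_compiled_iff PR PH π).2 ⟨hπ, hH⟩)
end
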